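/- There exists a pair of real Banach lattices (X, Y) that fails the Bishop–Phelps–Bollobás property for positive operators; specifically X = c₀ with its usual norm and Y = c₀ with the norm |‖x‖| = ‖x‖∞ + ‖(xₙ/2ⁿ)ₙ‖₂ fail it, because the (positive) formal identity c₀ → Y cannot be approximated in operator norm by norm-attaining operators. -/
import Mathlib


open ZeroAtInfty

/-- The norm `|‖x‖| = ‖x‖∞ + ‖(xₙ/2ⁿ)ₙ‖₂` on `c₀`, making `Y = (c₀, |‖·‖|)` a strictly
convex Banach lattice equivalent to `c₀`. -/
noncomputable def tripleNorm (x : C₀(ℕ, ℝ)) : ℝ :=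
  ‖x‖ + Real.sqrt (∑' n : ℕ, (x n / 2 ^ n) ^ 2)

/-- The operator norm of an operator from `c₀` into `Y = (c₀, |‖·‖|)`. -/
noncomputable def tripleOpNorm (S : C₀(ℕ, ℝ) →L[ℝ] C₀(ℕ, ℝ)) : ℝ :=
  sSup {r : ℝ | ∃ x : C₀(ℕ, ℝ), ‖x‖ ≤ 1 ∧ r = tripleNorm (S x)}

namespace BPB

lemma abs_apply_le (x : C₀(ℕ, ℝ)) (n : ℕ) : |x n| ≤ ‖x‖ := by
  rw [← ZeroAtInftyContinuousMap.norm_toBCF_eq_norm]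
  exact (x.toBCF.norm_coe_le_norm n)

lemma norm_le_of (x : C₀(ℕ, ℝ)) {C : ℝ} (hC : 0 ≤ C) (h : ∀ n, |x n| ≤ C) : ‖x‖ ≤ C := by
  rw [← ZeroAtInftyContinuousMap.norm_toBCF_eq_norm]
  exact BoundedContinuousFunction.norm_le hC |>.mpr h

lemma key_sq (x : C₀(ℕ, ℝ)) (n : ℕ) : (x n / 2 ^ n) ^ 2 ≤ ‖x‖ ^ 2 * (1 / 4 : ℝ) ^ n := by
  have h1 : |x n| ≤ ‖x‖ := abs_apply_le x n
  have h2 : (x n / 2 ^ n) ^ 2 = (x n) ^ 2 * (1 / 4 : ℝ) ^ n := by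
    have : ((2:ℝ) ^ n) ^ 2 = 4 ^ n := by
      rw [← pow_mul, pow_mul']; norm_num
    rw [div_pow, this, div_eq_mul_inv, one_div, inv_pow]
  rw [h2]
  have : (x n) ^ 2 ≤ ‖x‖ ^ 2 := by
    rw [← sq_abs]
    exact pow_le_pow_left₀ (abs_nonneg _) h1 2
  exact mul_le_mul_of_nonneg_right this (by positivity)

lemma summable_sq (x : C₀(ℕ, ℝ)) : Summable (fun n : ℕ => (x n / 2 ^ n) ^ 2) :=
  Summable.of_nonneg_of_le (fun n => sq_nonneg _) (key_sq x)
    (Summable.mul_left _ (summable_geometric_of_lt_one (by norm_num) (by norm_num)))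

end BPB

namespace BPB2
open BPB
open scoped ENNReal

lemma memℓp_w (x : C₀(ℕ, ℝ)) : Memℓp (fun n : ℕ => x n / 2 ^ n) 2 := by
  apply memℓp_gen
  have h : (fun n : ℕ => ‖x n / 2 ^ n‖ ^ (2 : ℝ≥0∞).toReal) = fun n : ℕ => (x n / 2 ^ n) ^ 2 := by
    funext n
    have : ((2 : ℝ≥0∞).toReal) = ((2 : ℕ) : ℝ) := by simp
    rw [this, Real.rpow_natCast, Real.norm_eq_abs, sq_abs]
  rw [h]
  exact summable_sq x

noncomputable def Phi (x : C₀(ℕ, ℝ)) : lp (fun _ : ℕ => ℝ) 2 := ⟨fun n => x n / 2 ^ n, memℓp_w x⟩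

lemma Phi_apply (x : C₀(ℕ, ℝ)) (n : ℕ) : (Phi x : ∀ _ : ℕ, ℝ) n = x n / 2 ^ n := rfl

lemma norm_Phi (x : C₀(ℕ, ℝ)) : ‖Phi x‖ = Real.sqrt (∑' n : ℕ, (x n / 2 ^ n) ^ 2) := by
  rw [lp.norm_eq_tsum_rpow (by norm_num) (Phi x)]
  have h : (fun n : ℕ => ‖(Phi x : ∀ _ : ℕ, ℝ) n‖ ^ (2 : ℝ≥0∞).toReal)
      = fun n : ℕ => (x n / 2 ^ n) ^ 2 := by
    funext n
    have : ((2 : ℝ≥0∞).toReal) = ((2 : ℕ) : ℝ) := by simp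
    rw [this, Real.rpow_natCast, Phi_apply, Real.norm_eq_abs, sq_abs]
  rw [h]
  rw [Real.sqrt_eq_rpow]
  norm_num

lemma tripleNorm_eq (x : C₀(ℕ, ℝ)) :
    (‖x‖ + Real.sqrt (∑' n : ℕ, (x n / 2 ^ n) ^ 2)) = ‖x‖ + ‖Phi x‖ := by rw [norm_Phi]

end BPB2

namespace BPB3
open BPB BPB2

lemma tripleNorm_def (x : C₀(ℕ, ℝ)) : tripleNorm x = ‖x‖ + ‖Phi x‖ := tripleNorm_eq x

lemma Phi_add (x y : C₀(ℕ, ℝ)) : Phi (x + y) = Phi x + Phi y := by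
  apply lp.ext
  rw [lp.coeFn_add]
  funext n
  simp [Phi_apply, add_div]

lemma Phi_smul (c : ℝ) (x : C₀(ℕ, ℝ)) : Phi (c • x) = c • Phi x := by
  apply lp.ext
  rw [lp.coeFn_smul]
  funext n
  simp [Phi_apply, mul_div_assoc]

lemma Phi_eq_zero {x : C₀(ℕ, ℝ)} (h : Phi x = 0) : x = 0 := by
  have h' : ∀ n, x n / 2 ^ n = 0 := by
    intro n
    have := congrArg (fun f : lp (fun _ : ℕ => ℝ) 2 => (f : ∀ _ : ℕ, ℝ) n) h
    simpa [Phi_apply] using this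
  ext n
  have := h' n
  field_simp at this
  simpa using this

lemma tripleNorm_nonneg (x : C₀(ℕ, ℝ)) : 0 ≤ tripleNorm x := by
  rw [tripleNorm_def]; positivity

lemma norm_le_tripleNorm (x : C₀(ℕ, ℝ)) : ‖x‖ ≤ tripleNorm x := by
  rw [tripleNorm_def]
  nlinarith [norm_nonneg (Phi x)]

lemma tripleNorm_add_le (x y : C₀(ℕ, ℝ)) :
    tripleNorm (x + y) ≤ tripleNorm x + tripleNorm y := by
  rw [tripleNorm_def, tripleNorm_def, tripleNorm_def, Phi_add]
  have h1 := norm_add_le x y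
  have h2 := norm_add_le (Phi x) (Phi y)
  linarith

lemma tripleNorm_smul (c : ℝ) (x : C₀(ℕ, ℝ)) :
    tripleNorm (c • x) = |c| * tripleNorm x := by
  have hc : ‖c • x‖ = |c| * ‖x‖ := by
    rw [← ZeroAtInftyContinuousMap.norm_toBCF_eq_norm, ← ZeroAtInftyContinuousMap.norm_toBCF_eq_norm]
    have : (c • x).toBCF = c • x.toBCF := rfl
    rw [this, norm_smul, Real.norm_eq_abs]
  rw [tripleNorm_def, tripleNorm_def, Phi_smul, hc, norm_smul]
  simp [Real.norm_eq_abs, mul_add]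

lemma tripleNorm_zero : tripleNorm (0 : C₀(ℕ, ℝ)) = 0 := by
  have := tripleNorm_smul 0 0
  simpa using this

lemma tripleNorm_neg (x : C₀(ℕ, ℝ)) : tripleNorm (-x) = tripleNorm x := by
  have h := tripleNorm_smul (-1) x
  rw [neg_one_smul ℝ x] at h
  simpa using h

lemma tripleNorm_eq_zero {x : C₀(ℕ, ℝ)} (h : tripleNorm x = 0) : x = 0 := by
  have h1 := norm_le_tripleNorm x
  rw [h] at h1
  have : ‖x‖ = 0 := le_antisymm h1 (norm_nonneg x)
  exact norm_eq_zero.mp this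

end BPB3

namespace BPB4
open BPB BPB2 BPB3

noncomputable def K : ℝ := 1 + Real.sqrt (4 / 3)

lemma K_pos : 0 < K := by
  have := Real.sqrt_nonneg (4 / 3 : ℝ); unfold K; linarith

lemma K_lt_three : K < 3 := by
  unfold K
  have h : Real.sqrt (4 / 3) < 2 := by
    rw [show (2:ℝ) = Real.sqrt 4 by rw [show (4:ℝ) = 2^2 by norm_num, Real.sqrt_sq]; norm_num]
    exact Real.sqrt_lt_sqrt (by norm_num) (by norm_num)
  linarith

lemma tsum_sq_le (x : C₀(ℕ, ℝ)) :
    (∑' n : ℕ, (x n / 2 ^ n) ^ 2) ≤ ‖x‖ ^ 2 * (4 / 3) := by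
  have hs : Summable (fun n : ℕ => ‖x‖ ^ 2 * (1 / 4 : ℝ) ^ n) :=
    Summable.mul_left _ (summable_geometric_of_lt_one (by norm_num) (by norm_num))
  have h := Summable.tsum_le_tsum (key_sq x) (summable_sq x) hs
  calc (∑' n : ℕ, (x n / 2 ^ n) ^ 2) ≤ ∑' n : ℕ, ‖x‖ ^ 2 * (1 / 4 : ℝ) ^ n := h
    _ = ‖x‖ ^ 2 * ∑' n : ℕ, (1 / 4 : ℝ) ^ n := tsum_mul_left
    _ = ‖x‖ ^ 2 * (4 / 3) := by
        rw [tsum_geometric_of_lt_one (by norm_num) (by norm_num)]; norm_num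

lemma tripleNorm_le_K (x : C₀(ℕ, ℝ)) : tripleNorm x ≤ K * ‖x‖ := by
  unfold tripleNorm K
  have h1 : Real.sqrt (∑' n : ℕ, (x n / 2 ^ n) ^ 2) ≤ Real.sqrt (‖x‖ ^ 2 * (4 / 3)) :=
    Real.sqrt_le_sqrt (tsum_sq_le x)
  have h2 : Real.sqrt (‖x‖ ^ 2 * (4 / 3)) = ‖x‖ * Real.sqrt (4 / 3) := by
    rw [Real.sqrt_mul (sq_nonneg _), Real.sqrt_sq (norm_nonneg _)]
  nlinarith [norm_nonneg x, Real.sqrt_nonneg (4/3 : ℝ)]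

lemma bddAbove_set (S : C₀(ℕ, ℝ) →L[ℝ] C₀(ℕ, ℝ)) :
    BddAbove {r : ℝ | ∃ x : C₀(ℕ, ℝ), ‖x‖ ≤ 1 ∧ r = tripleNorm (S x)} := by
  refine ⟨K * ‖S‖, ?_⟩
  rintro r ⟨x, hx, rfl⟩
  calc tripleNorm (S x) ≤ K * ‖S x‖ := tripleNorm_le_K _
    _ ≤ K * (‖S‖ * ‖x‖) := by
        exact mul_le_mul_of_nonneg_left (S.le_opNorm x) (le_of_lt K_pos)
    _ ≤ K * ‖S‖ := by nlinarith [mul_nonneg (mul_nonneg K_pos.le S.opNorm_nonneg) (sub_nonneg.mpr hx)]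

lemma tripleNorm_le_opNorm (S : C₀(ℕ, ℝ) →L[ℝ] C₀(ℕ, ℝ)) {x : C₀(ℕ, ℝ)} (h : ‖x‖ ≤ 1) :
    tripleNorm (S x) ≤ tripleOpNorm S :=
  le_csSup (bddAbove_set S) ⟨x, h, rfl⟩

end BPB4

namespace BPB5
open BPB BPB2 BPB3 BPB4 Filter

noncomputable def eC0 (n : ℕ) : C₀(ℕ, ℝ) :=
  ⟨⟨fun m => if m = n then 1 else 0, continuous_of_discreteTopology⟩, by
    rw [cocompact_eq_atTop]
    refine Tendsto.congr' ?_ tendsto_const_nhds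
    filter_upwards [eventually_ge_atTop (n + 1)] with m hm
    rw [if_neg (by omega)]⟩

lemma eC0_apply (n m : ℕ) : eC0 n m = if m = n then 1 else 0 := rfl

lemma norm_eC0 (n : ℕ) : ‖eC0 n‖ = 1 := by
  apply le_antisymm
  · apply norm_le_of _ (by norm_num)
    intro m
    rw [eC0_apply]
    split <;> norm_num
  · have := abs_apply_le (eC0 n) n
    rw [eC0_apply, if_pos rfl] at this
    simpa using this

noncomputable def chi (k : ℕ) : C₀(ℕ, ℝ) :=
  ⟨⟨fun m => if m < k then 1 else 0, continuous_of_discreteTopology⟩, by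
    rw [cocompact_eq_atTop]
    refine Tendsto.congr' ?_ tendsto_const_nhds
    filter_upwards [eventually_ge_atTop k] with m hm
    rw [if_neg (by omega)]⟩

lemma chi_apply (k m : ℕ) : chi k m = if m < k then 1 else 0 := rfl

lemma norm_chi (k : ℕ) : ‖chi (k + 1)‖ = 1 := by
  apply le_antisymm
  · apply norm_le_of _ (by norm_num)
    intro m
    rw [chi_apply]
    split <;> norm_num
  · have := abs_apply_le (chi (k + 1)) 0
    rw [chi_apply, if_pos (by omega)] at this
    simpa using this

lemma tripleNorm_chi (k : ℕ) :
    tripleNorm (chi (k + 1)) = 1 + Real.sqrt (∑ n ∈ Finset.range (k + 1), (1 / 4 : ℝ) ^ n) := by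
  unfold tripleNorm
  rw [norm_chi]
  congr 2
  rw [tsum_eq_sum (s := Finset.range (k + 1)) (by
    intro n hn
    rw [chi_apply, if_neg (by simpa using hn)]
    simp)]
  apply Finset.sum_congr rfl
  intro n hn
  rw [chi_apply, if_pos (by simpa using hn)]
  have h4 : ((2:ℝ) ^ n) ^ 2 = 4 ^ n := by
    rw [← pow_mul, pow_mul']; norm_num
  rw [div_pow, one_pow, h4]
  simp [one_div, inv_pow]

lemma tendsto_tripleNorm_chi :
    Tendsto (fun k => tripleNorm (chi (k + 1))) atTop (nhds K) := by
  have hgeom : HasSum (fun n : ℕ => (1 / 4 : ℝ) ^ n) (4 / 3) := by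
    have := hasSum_geometric_of_lt_one (r := (1/4 : ℝ)) (by norm_num) (by norm_num)
    norm_num at this
    convert this using 2
  have h1 : Tendsto (fun k : ℕ => ∑ n ∈ Finset.range k, (1 / 4 : ℝ) ^ n) atTop (nhds (4 / 3)) :=
    hgeom.tendsto_sum_nat
  have h2 : Tendsto (fun k : ℕ => ∑ n ∈ Finset.range (k + 1), (1 / 4 : ℝ) ^ n) atTop (nhds (4 / 3)) :=
    h1.comp (tendsto_add_atTop_nat 1)
  have h3 : Tendsto (fun k : ℕ => 1 + Real.sqrt (∑ n ∈ Finset.range (k + 1), (1 / 4 : ℝ) ^ n))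
      atTop (nhds (1 + Real.sqrt (4 / 3))) :=
    (Real.continuous_sqrt.continuousAt.tendsto.comp h2).const_add 1
  have : K = 1 + Real.sqrt (4 / 3) := rfl
  rw [this]
  exact h3.congr (fun k => (tripleNorm_chi k).symm)

end BPB5

namespace BPB6
open BPB BPB2 BPB3 BPB4 BPB5 Filter

noncomputable def S₀ : C₀(ℕ, ℝ) →L[ℝ] C₀(ℕ, ℝ) := K⁻¹ • ContinuousLinearMap.id ℝ _

lemma S₀_apply (x : C₀(ℕ, ℝ)) : S₀ x = K⁻¹ • x := rfl

lemma S₀_pos : ∀ x : C₀(ℕ, ℝ), (∀ n, 0 ≤ x n) → ∀ n, 0 ≤ S₀ x n := by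
  intro x hx n
  rw [S₀_apply]
  have : (K⁻¹ • x) n = K⁻¹ * x n := rfl
  rw [this]
  exact mul_nonneg (inv_nonneg.mpr K_pos.le) (hx n)

lemma tripleNorm_S₀ (x : C₀(ℕ, ℝ)) : tripleNorm (S₀ x) = K⁻¹ * tripleNorm x := by
  rw [S₀_apply, tripleNorm_smul]
  congr 1
  rw [abs_of_nonneg (inv_nonneg.mpr K_pos.le)]

lemma tendsto_S₀_chi :
    Tendsto (fun k => tripleNorm (S₀ (chi (k + 1)))) atTop (nhds 1) := by
  have h := tendsto_tripleNorm_chi.const_mul K⁻¹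
  rw [inv_mul_cancel₀ (ne_of_gt K_pos)] at h
  exact h.congr (fun k => by rw [tripleNorm_S₀])

lemma tripleOpNorm_S₀ : tripleOpNorm S₀ = 1 := by
  apply le_antisymm
  · apply csSup_le
    · exact ⟨0, ⟨0, by simp, by simp [map_zero, tripleNorm_zero]⟩⟩
    · rintro r ⟨x, hx, rfl⟩
      rw [tripleNorm_S₀]
      have h := tripleNorm_le_K x
      have hK := K_pos
      calc K⁻¹ * tripleNorm x ≤ K⁻¹ * (K * ‖x‖) := by
            exact mul_le_mul_of_nonneg_left h (inv_nonneg.mpr hK.le)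
        _ = ‖x‖ := by field_simp
        _ ≤ 1 := hx
  · refine le_of_tendsto tendsto_S₀_chi ?_
    filter_upwards with k
    exact tripleNorm_le_opNorm S₀ (le_of_eq (norm_chi k))

end BPB6

namespace BPB7
open BPB BPB2 BPB3 BPB4 BPB5 BPB6 Filter

lemma Phi_sub (x y : C₀(ℕ, ℝ)) : Phi (x - y) = Phi x - Phi y := by
  have h := Phi_add (x - y) y
  rw [sub_add_cancel] at h
  rw [h]; abel

lemma exists_T_e_zero (T : C₀(ℕ, ℝ) →L[ℝ] C₀(ℕ, ℝ)) (hT : tripleOpNorm T = 1)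
    (u₀ : C₀(ℕ, ℝ)) (hu : ‖u₀‖ = 1) (hTu : tripleNorm (T u₀) = 1) :
    ∃ n, T (eC0 n) = 0 := by
  -- find a coordinate where u₀ is small
  have hz : Tendsto (fun m => u₀ m) atTop (nhds 0) := by
    have := u₀.zero_at_infty'
    rwa [cocompact_eq_atTop] at this
  obtain ⟨n, hn⟩ : ∃ n, |u₀ n| < 1 / 2 := by
    have h := Metric.tendsto_nhds.mp hz (1 / 2) (by norm_num)
    obtain ⟨n, hn⟩ := h.exists
    exact ⟨n, by simpa [Real.dist_eq] using hn⟩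
  refine ⟨n, ?_⟩
  set v : C₀(ℕ, ℝ) := (1 / 2 : ℝ) • eC0 n with hv
  have hvapp : ∀ m, v m = (1 / 2 : ℝ) * (if m = n then 1 else 0) := fun m => rfl
  have hplus : ‖u₀ + v‖ ≤ 1 := by
    apply norm_le_of _ (by norm_num)
    intro m
    have : (u₀ + v) m = u₀ m + v m := rfl
    rw [this, hvapp]
    by_cases hm : m = n
    · subst hm
      rw [if_pos rfl]
      have := abs_add_le (u₀ m) (1 / 2)
      calc |u₀ m + 1 / 2 * 1| ≤ |u₀ m| + |(1 / 2 : ℝ) * 1| := abs_add_le _ _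
        _ ≤ 1 := by rw [abs_of_nonneg (by norm_num : (0:ℝ) ≤ 1/2 * 1)]; linarith
    · rw [if_neg hm]
      simpa using (abs_apply_le u₀ m).trans (le_of_eq hu)
  have hminus : ‖u₀ - v‖ ≤ 1 := by
    apply norm_le_of _ (by norm_num)
    intro m
    have : (u₀ - v) m = u₀ m - v m := rfl
    rw [this, hvapp]
    by_cases hm : m = n
    · subst hm
      rw [if_pos rfl]
      calc |u₀ m - 1 / 2 * 1| ≤ |u₀ m| + |(1 / 2 : ℝ) * 1| := abs_sub _ _
        _ ≤ 1 := by rw [abs_of_nonneg (by norm_num : (0:ℝ) ≤ 1/2 * 1)]; linarith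
    · rw [if_neg hm]
      simpa using (abs_apply_le u₀ m).trans (le_of_eq hu)
  set a := T (u₀ + v) with ha
  set b := T (u₀ - v) with hb
  have ha1 : tripleNorm a ≤ 1 := hT ▸ tripleNorm_le_opNorm T hplus
  have hb1 : tripleNorm b ≤ 1 := hT ▸ tripleNorm_le_opNorm T hminus
  have hab : a + b = (2 : ℝ) • T u₀ := by
    rw [ha, hb, ← map_add]
    have h2 : (u₀ + v) + (u₀ - v) = (2 : ℝ) • u₀ := by module
    rw [h2, map_smul]
  have htab : tripleNorm (a + b) = 2 := by
    rw [hab, tripleNorm_smul, hTu]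
    norm_num
  have e1 : ‖a + b‖ + ‖Phi a + Phi b‖ = 2 := by
    have := tripleNorm_def (a + b)
    rw [Phi_add] at this
    linarith [htab, this.symm.trans htab]
  have n1 : ‖a + b‖ ≤ ‖a‖ + ‖b‖ := norm_add_le a b
  have n2 : ‖Phi a + Phi b‖ ≤ ‖Phi a‖ + ‖Phi b‖ := norm_add_le _ _
  have da := tripleNorm_def a
  have db := tripleNorm_def b
  have heq : ‖Phi a + Phi b‖ = ‖Phi a‖ + ‖Phi b‖ := by linarith
  have hta : tripleNorm a = 1 := by linarith
  have htb : tripleNorm b = 1 := by linarith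
  have ha0 : a ≠ 0 := by
    intro h
    rw [h, tripleNorm_zero] at hta
    norm_num at hta
  have hb0 : b ≠ 0 := by
    intro h
    rw [h, tripleNorm_zero] at htb
    norm_num at htb
  have hPa : Phi a ≠ 0 := fun h => ha0 (Phi_eq_zero h)
  have hPb : Phi b ≠ 0 := fun h => hb0 (Phi_eq_zero h)
  have hsr : SameRay ℝ (Phi a) (Phi b) := sameRay_iff_norm_add.mpr heq
  obtain ⟨r₁, r₂, hr₁, hr₂, hr⟩ := hsr.exists_pos hPa hPb
  have hPhieq : Phi (r₁ • a) = Phi (r₂ • b) := by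
    rw [Phi_smul, Phi_smul, hr]
  have hab' : r₁ • a = r₂ • b := by
    have h0 : Phi (r₁ • a - r₂ • b) = 0 := by rw [Phi_sub, hPhieq, sub_self]
    exact sub_eq_zero.mp (Phi_eq_zero h0)
  have hr12 : r₁ = r₂ := by
    have h := congrArg tripleNorm hab'
    rw [tripleNorm_smul, tripleNorm_smul, hta, htb, abs_of_pos hr₁, abs_of_pos hr₂] at h
    simpa using h
  have haeb : a = b := by
    rw [hr12] at hab'
    exact smul_right_injective (C₀(ℕ, ℝ)) (ne_of_gt hr₂) hab'
  have hd : (u₀ + v) - (u₀ - v) = eC0 n := by rw [hv]; module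
  have hTe : T (eC0 n) = a - b := by rw [← hd, map_sub, ha, hb]
  rw [hTe, haeb, sub_self]

end BPB7

open BPB BPB2 BPB3 BPB4 BPB5 BPB6 BPB7 Filter

/-- The pair `(c₀, Y)`, where `Y` is `c₀` with the norm `|‖·‖|`, fails the
Bishop–Phelps–Bollobás property for positive operators. -/
theorem not_bishopPhelpsBollobas_positive_c0_Y :
    ¬ ∀ ε : ℝ, 0 < ε → ε < 1 →
      ∃ η : ℝ, 0 < η ∧ η < ε ∧
        ∀ S : C₀(ℕ, ℝ) →L[ℝ] C₀(ℕ, ℝ),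
          (∀ x : C₀(ℕ, ℝ), (∀ n, 0 ≤ x n) → ∀ n, 0 ≤ S x n) → tripleOpNorm S = 1 →
          ∀ x₀ : C₀(ℕ, ℝ), ‖x₀‖ = 1 → tripleNorm (S x₀) > 1 - η →
            ∃ (u₀ : C₀(ℕ, ℝ)) (T : C₀(ℕ, ℝ) →L[ℝ] C₀(ℕ, ℝ)),
              ‖u₀‖ = 1 ∧ (∀ x : C₀(ℕ, ℝ), (∀ n, 0 ≤ x n) → ∀ n, 0 ≤ T x n) ∧
              tripleOpNorm T = 1 ∧ tripleNorm (T u₀) = 1 ∧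
              ‖u₀ - x₀‖ < ε ∧ tripleOpNorm (T - S) < ε := by
  intro H
  obtain ⟨η, hη0, hηε, hP⟩ := H (1 / 3) (by norm_num) (by norm_num)
  obtain ⟨k, hk⟩ : ∃ k, tripleNorm (S₀ (chi (k + 1))) > 1 - η := by
    have h : ∀ᶠ k in atTop, 1 - η < tripleNorm (S₀ (chi (k + 1))) :=
      tendsto_S₀_chi.eventually (eventually_gt_nhds (by linarith))
    exact h.exists
  obtain ⟨u₀, T, hu, hTpos, hT1, hTu, hdist, hTS⟩ :=
    hP S₀ S₀_pos tripleOpNorm_S₀ (chi (k + 1)) (norm_chi k) hk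
  obtain ⟨n, hTe⟩ := exists_T_e_zero T hT1 u₀ hu hTu
  have h1 : tripleNorm ((T - S₀) (eC0 n)) ≤ tripleOpNorm (T - S₀) :=
    tripleNorm_le_opNorm _ (le_of_eq (norm_eC0 n))
  have h2 : (T - S₀) (eC0 n) = -(K⁻¹ • eC0 n) := by
    rw [ContinuousLinearMap.sub_apply, hTe, S₀_apply, zero_sub]
  have h3 : tripleNorm ((T - S₀) (eC0 n)) = K⁻¹ * tripleNorm (eC0 n) := by
    rw [h2, tripleNorm_neg, tripleNorm_smul, abs_of_nonneg (inv_nonneg.mpr K_pos.le)]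
  have h4 : (1 : ℝ) ≤ tripleNorm (eC0 n) := by
    have h := norm_le_tripleNorm (eC0 n)
    rwa [norm_eC0] at h
  have h5 : (1 / 3 : ℝ) < K⁻¹ := by
    nlinarith [mul_inv_cancel₀ (ne_of_gt K_pos), K_lt_three, K_pos, inv_nonneg.mpr K_pos.le]
  have h6 : K⁻¹ ≤ K⁻¹ * tripleNorm (eC0 n) :=
    le_mul_of_one_le_right (inv_nonneg.mpr K_pos.le) h4
  linarith
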